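/- Let K* : X × X → R be symmetric with every row K*(x,·) a probability distribution on the finite set X, and suppose K* is constant on each cell Ω_k of a finite partition {Ω_k}_{k ∈ S} of X × X, taking value f(k)/|X| on Ω_k. Then for any subset S' ⊆ S and any t ∈ N, (1/|X|)·∑_{x ∈ X} H_t(K*(x,·)) ≤ (1 - ∑_{k ∈ S'} (|Ω_k|/|X|^2)·f(k)) + (1/(t+1))·max_{k ∈ S'} f(k). -/

import Mathlib

/-- The `t`-th permuted moment of a vector indexed by a finite type `X`. -/
noncomputable def pmomX (X : Type) [Fintype X] [DecidableEq X] (t : ℕ) (p : X → ℝ) : ℝ :=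
  Finset.univ.sup' ⟨(Fintype.equivFin X).symm, Finset.mem_univ _⟩
    (fun e : Fin (Fintype.card X) ≃ X =>
      ∑ i : Fin (Fintype.card X), ((i : ℝ) / (Fintype.card X)) ^ t * p (e i))

/-!
Apply the bound `H_t(p) ≤ (1 - ∑ᵢ min pᵢ λ) + λ|X|/(t+1)` to each row `K x` with the single
threshold `λ = max_{k ∈ S'} f k / |X|`. On every cell `Ω k` with `k ∈ S'` the kernel equals
`f k / |X| ≤ λ`, so `min (K x y) λ = f k / |X|` there; summed over the disjoint cells, the
row-wise truncated masses add up to at least `∑_{k ∈ S'} |Ω k| f k / |X|`. The bound on `H_t`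
itself comes from `(i/|X|)^t p ≤ (p - min p λ) + (i/|X|)^t λ` together with
`∑_{i < n} i^t ≤ ∫₀ⁿ x^t dx = n^(t+1)/(t+1)`.
-/

open Finset

theorem sum_range_pow_le_div (n t : ℕ) :
    ∑ i ∈ range n, (i : ℝ) ^ t ≤ (n : ℝ) ^ (t + 1) / (t + 1) := by
  have hmono : MonotoneOn (fun x : ℝ => x ^ t) (Set.Icc 0 (0 + n)) :=
    fun x hx y _ hxy => pow_le_pow_left₀ hx.1 hxy t
  simpa [integral_pow] using hmono.sum_le_integral

theorem sum_fin_div_pow_le (n t : ℕ) :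
    ∑ i : Fin n, ((i : ℝ) / n) ^ t ≤ n / (t + 1) := by
  rcases n.eq_zero_or_pos with rfl | hn
  · simp
  calc ∑ i : Fin n, ((i : ℝ) / n) ^ t = (∑ i ∈ range n, (i : ℝ) ^ t) / n ^ t := by
        simp only [div_pow, ← sum_div, Fin.sum_univ_eq_sum_range (fun i => (i : ℝ) ^ t)]
    _ ≤ (n : ℝ) ^ (t + 1) / (t + 1) / n ^ t := by gcongr; exact sum_range_pow_le_div n t
    _ = n / (t + 1) := by field_simp; ring

theorem mul_le_sub_min_add_mul {a p l : ℝ} (ha₀ : 0 ≤ a) (ha₁ : a ≤ 1) :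
    a * p ≤ (p - min p l) + a * l := by
  rcases min_cases p l with ⟨h, hpl⟩ | ⟨h, hlp⟩ <;> rw [h] <;> nlinarith

theorem pmomX_le_sum_sub_min_add (X : Type) [Fintype X] [DecidableEq X] (t : ℕ) (p : X → ℝ)
    {l : ℝ} (hl : 0 ≤ l) :
    pmomX X t p ≤ ∑ x, (p x - min (p x) l) + l * Fintype.card X / (t + 1) := by
  set n := Fintype.card X
  refine sup'_le _ _ fun e _ => ?_
  have hweight : ∀ i : Fin n, 0 ≤ ((i : ℝ) / n) ^ t ∧ ((i : ℝ) / n) ^ t ≤ 1 := fun i =>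
    ⟨by positivity, pow_le_one₀ (by positivity) (div_le_one_of_le₀ (by exact_mod_cast i.2.le)
      (by positivity))⟩
  calc ∑ i : Fin n, ((i : ℝ) / n) ^ t * p (e i)
      ≤ ∑ i : Fin n, ((p (e i) - min (p (e i)) l) + ((i : ℝ) / n) ^ t * l) :=
        sum_le_sum fun i _ => mul_le_sub_min_add_mul (hweight i).1 (hweight i).2
    _ = ∑ x, (p x - min (p x) l) + (∑ i : Fin n, ((i : ℝ) / n) ^ t) * l := by
        rw [sum_add_distrib, ← sum_mul, e.sum_comp (fun x => p x - min (p x) l)]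
    _ ≤ ∑ x, (p x - min (p x) l) + n / (t + 1) * l := by
        gcongr; exact sum_fin_div_pow_le n t
    _ = ∑ x, (p x - min (p x) l) + l * n / (t + 1) := by ring

theorem sum_ncard_mul_le_sum {α ι : Type*} [Fintype α] (g : α → ℝ) (hg : ∀ a, 0 ≤ g a)
    (Ω : ι → Set α) (hdisj : Pairwise (Function.onFun Disjoint Ω)) (S : Finset ι) (c : ι → ℝ)
    (hc : ∀ k ∈ S, ∀ a ∈ Ω k, g a = c k) :
    ∑ k ∈ S, ((Ω k).ncard : ℝ) * c k ≤ ∑ a, g a := by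
  classical
  have hpd : (S : Set ι).PairwiseDisjoint fun k => (Ω k).toFinset := fun k _ k' _ hkk' =>
    Set.disjoint_toFinset.mpr (hdisj hkk')
  calc ∑ k ∈ S, ((Ω k).ncard : ℝ) * c k = ∑ k ∈ S, ∑ a ∈ (Ω k).toFinset, g a := by
        refine sum_congr rfl fun k hk => ?_
        rw [sum_congr rfl fun a ha => hc k hk a (Set.mem_toFinset.mp ha), sum_const,
          Set.ncard_eq_toFinset_card', nsmul_eq_mul]
    _ = ∑ a ∈ S.biUnion fun k => (Ω k).toFinset, g a := (sum_biUnion hpd).symm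
    _ ≤ ∑ a, g a := sum_le_sum_of_subset_of_nonneg (subset_univ _) fun a _ _ => hg a

theorem avg_pmom_bound_general (X ι : Type) [Fintype X] [DecidableEq X]
    (K : X → X → ℝ) (f : ι → ℝ) (Ω : ι → Set (X × X)) (t : ℕ)
    (hnonneg : ∀ x y, 0 ≤ K x y)
    (hrow : ∀ x, ∑ y : X, K x y = 1)
    (hdisj : Pairwise (Function.onFun Disjoint Ω))
    (hval : ∀ k, ∀ p ∈ Ω k, K p.1 p.2 = f k / (Fintype.card X : ℝ))
    (hf : ∀ k, 0 ≤ f k)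
    (S' : Finset ι) (hS' : S'.Nonempty) :
    (1 / (Fintype.card X : ℝ)) * ∑ x : X, pmomX X t (K x) ≤
      (1 - ∑ k ∈ S', (((Ω k).ncard : ℝ) / ((Fintype.card X : ℝ) ^ 2)) * f k)
        + (1 / ((t : ℝ) + 1)) * S'.sup' hS' f := by
  set M := S'.sup' hS' f
  have hM : 0 ≤ M := (hf _).trans (le_sup' f hS'.choose_spec)
  rcases isEmpty_or_nonempty X with hX | hX
  · simp only [Fintype.card_eq_zero, univ_eq_empty, sum_empty, CharP.cast_eq_zero, mul_zero,
      zero_pow two_ne_zero, div_zero, zero_mul, sum_const_zero, sub_zero]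
    positivity
  set n : ℝ := (Fintype.card X : ℝ)
  have hn : 0 < n := by positivity
  have hrowbound : ∀ x, pmomX X t (K x) ≤ 1 - ∑ y, min (K x y) (M / n) + M / (t + 1) := by
    intro x
    have h := pmomX_le_sum_sub_min_add X t (K x) (div_nonneg hM hn.le)
    rwa [sum_sub_distrib, hrow, div_mul_cancel₀ M hn.ne'] at h
  have hcells : ∑ k ∈ S', ((Ω k).ncard : ℝ) * (f k / n) ≤ ∑ x, ∑ y, min (K x y) (M / n) := by
    rw [← Fintype.sum_prod_type']
    refine sum_ncard_mul_le_sum _ (fun p => le_min (hnonneg _ _) (by positivity)) Ω hdisj S' _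
      fun k hk p hp => ?_
    rw [hval k p hp]
    exact min_eq_left (div_le_div_of_nonneg_right (le_sup' f hk) hn.le)
  calc (1 / n) * ∑ x, pmomX X t (K x)
      ≤ (1 / n) * ∑ x, (1 - ∑ y, min (K x y) (M / n) + M / (t + 1)) := by
        gcongr with x; exact hrowbound x
    _ = 1 - (1 / n) * ∑ x, ∑ y, min (K x y) (M / n) + (1 / (t + 1)) * M := by
        simp only [sum_add_distrib, sum_sub_distrib, sum_const, card_univ, nsmul_eq_mul, mul_one, n]
        field_simp
    _ ≤ 1 - (1 / n) * ∑ k ∈ S', ((Ω k).ncard : ℝ) * (f k / n) + (1 / (t + 1)) * M := by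
        gcongr
    _ = (1 - ∑ k ∈ S', ((Ω k).ncard : ℝ) / n ^ 2 * f k) + (1 / (t + 1)) * M := by
        rw [mul_sum]; congr 2; refine sum_congr rfl fun k _ => ?_; field_simp

/-- Bound on the averaged permuted moment of a kernel which is constant on the
cells of a partition of `X × X`. -/
theorem avg_pmom_bound (X ι : Type) [Fintype X] [DecidableEq X] [Fintype ι]
    (K : X → X → ℝ) (f : ι → ℝ) (Ω : ι → Set (X × X)) (t : ℕ)
    (hsymm : ∀ x y, K x y = K y x)
    (hnonneg : ∀ x y, 0 ≤ K x y)
    (hrow : ∀ x, ∑ y : X, K x y = 1)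
    (hcover : ∀ p : X × X, ∃ k, p ∈ Ω k)
    (hdisj : Pairwise (Function.onFun Disjoint Ω))
    (hval : ∀ k, ∀ p ∈ Ω k, K p.1 p.2 = f k / (Fintype.card X : ℝ))
    (hf : ∀ k, 0 ≤ f k)
    (S' : Finset ι) (hS' : S'.Nonempty) :
    (1 / (Fintype.card X : ℝ)) * ∑ x : X, pmomX X t (K x) ≤
      (1 - ∑ k ∈ S', (((Ω k).ncard : ℝ) / ((Fintype.card X : ℝ) ^ 2)) * f k)
        + (1 / ((t : ℝ) + 1)) * S'.sup' hS' f :=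
  avg_pmom_bound_general X ι K f Ω t hnonneg hrow hdisj hval hf S' hS'
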